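/- arXiv:2209.12388 — 3 statements merged into one kernel-verified Lean document; each statement's English description precedes it below -/
import Mathlib

section
/- Let G ≥ 1 and for g = 1,…,G let X̃_g be an n_g × p real matrix. Then there exists a unique family of pairs of n_g × p real matrices (J_g, A_g), g = 1,…,G, such that X̃_g = J_g + A_g for every g and: (i) the row spaces row(J_1) = ⋯ = row(J_G) are all equal, and this common row space is contained in row(X̃_g) for every g; (ii) row(J_g) is orthogonal to row(A_g) for every g; (iii) the intersection ∩_{g=1}^G row(A_g) is the zero subspace of ℝ^p. -/
open Matrix

/-- The row space of a matrix: the span of its rows in `ℝ^p`. -/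
def rowSpace {m k : ℕ} (M : Matrix (Fin m) (Fin k) ℝ) : Submodule ℝ (Fin k → ℝ) :=
  Submodule.span ℝ (Set.range M)

/-- Two subspaces are orthogonal with respect to the standard Euclidean
inner product (dot product). -/
def OrthSub {ι : Type} [Fintype ι] (U V : Submodule ℝ (ι → ℝ)) : Prop :=
  ∀ u ∈ U, ∀ v ∈ V, u ⬝ᵥ v = 0

lemma dot_eq_inner {k : ℕ} (u v : Fin k → ℝ) :
    u ⬝ᵥ v = @inner ℝ (EuclideanSpace ℝ (Fin k)) _ (WithLp.toLp 2 u) (WithLp.toLp 2 v) := by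
  simp [dotProduct, PiLp.inner_apply, RCLike.inner_apply, mul_comm]

def eqv (k : ℕ) : EuclideanSpace ℝ (Fin k) ≃ₗ[ℝ] (Fin k → ℝ) := WithLp.linearEquiv 2 ℝ _

def eu {k : ℕ} (V : Submodule ℝ (Fin k → ℝ)) : Submodule ℝ (EuclideanSpace ℝ (Fin k)) :=
  V.comap (eqv k).toLinearMap

def pl {k : ℕ} (W : Submodule ℝ (EuclideanSpace ℝ (Fin k))) : Submodule ℝ (Fin k → ℝ) :=
  W.comap (eqv k).symm.toLinearMap

lemma row_mem_rowSpace {m k : ℕ} (M : Matrix (Fin m) (Fin k) ℝ) (i : Fin m) :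
    M i ∈ rowSpace M := Submodule.subset_span (Set.mem_range_self i)

noncomputable def projRows {m k : ℕ} (V : Submodule ℝ (EuclideanSpace ℝ (Fin k)))
    (M : Matrix (Fin m) (Fin k) ℝ) : Matrix (Fin m) (Fin k) ℝ :=
  fun i => (V.starProjection (WithLp.toLp 2 (M i))).ofLp

lemma rowSpace_projRows {m k : ℕ} (V : Submodule ℝ (Fin k → ℝ))
    (M : Matrix (Fin m) (Fin k) ℝ) (h : V ≤ rowSpace M) :
    rowSpace (projRows (eu V) M) = V := by
  apply le_antisymm
  · rw [rowSpace, Submodule.span_le]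
    rintro _ ⟨i, rfl⟩
    exact Submodule.starProjection_apply_mem (eu V) _
  · set Pl : (Fin k → ℝ) →ₗ[ℝ] (Fin k → ℝ) :=
      (eqv k).toLinearMap ∘ₗ (eu V).starProjection.toLinearMap ∘ₗ (eqv k).symm.toLinearMap
      with hPl
    have hmap : rowSpace (projRows (eu V) M) = (rowSpace M).map Pl := by
      rw [rowSpace, rowSpace, ← Submodule.span_image]
      congr 1
      exact Set.range_comp (⇑Pl) M
    intro v hv
    rw [hmap]
    exact ⟨v, h hv, congrArg WithLp.ofLp
      (Submodule.starProjection_eq_self_iff (K := eu V) (v := WithLp.toLp 2 v) |>.mpr hv)⟩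

/-- Lemma 1 (first part): for matrices `X̃_g`, `g = 1,…,G`, there is a unique family of
pairs `(J_g, A_g)` with `X̃_g = J_g + A_g` such that (i) the row spaces of the `J_g`
all coincide and are contained in `row(X̃_g)` for every `g`, (ii) `row(J_g) ⊥ row(A_g)`
for every `g`, and (iii) `⋂_g row(A_g) = {0}`. -/
theorem stmt0 (G p : ℕ) (hG : 1 ≤ G) (n : Fin G → ℕ)
    (X : ∀ g : Fin G, Matrix (Fin (n g)) (Fin p) ℝ) :
    ∃! JA : ∀ g : Fin G, Matrix (Fin (n g)) (Fin p) ℝ × Matrix (Fin (n g)) (Fin p) ℝ,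
      (∀ g, X g = (JA g).1 + (JA g).2) ∧
      (∀ g h, rowSpace (JA g).1 = rowSpace (JA h).1) ∧
      (∀ g, rowSpace (JA g).1 ≤ rowSpace (X g)) ∧
      (∀ g, OrthSub (rowSpace (JA g).1) (rowSpace (JA g).2)) ∧
      (⨅ g, rowSpace (JA g).2) = ⊥ := by
  classical
  haveI : NeZero G := ⟨by omega⟩
  set V : Submodule ℝ (Fin p → ℝ) := ⨅ g, rowSpace (X g) with hVdef
  have hVle : ∀ g, V ≤ rowSpace (X g) := fun g => iInf_le _ g
  set J : ∀ g : Fin G, Matrix (Fin (n g)) (Fin p) ℝ := fun g => projRows (eu V) (X g) with hJdef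
  set A : ∀ g : Fin G, Matrix (Fin (n g)) (Fin p) ℝ := fun g => X g - J g with hAdef
  have hrowJ : ∀ g, rowSpace (J g) = V := fun g => rowSpace_projRows V (X g) (hVle g)
  have hrowA : ∀ g, rowSpace (A g) ≤ rowSpace (X g) ⊓ pl (eu V)ᗮ := by
    intro g
    rw [rowSpace, Submodule.span_le]
    rintro _ ⟨i, rfl⟩
    constructor
    · have h1 : X g i ∈ rowSpace (X g) := row_mem_rowSpace _ i
      have h2 : J g i ∈ rowSpace (X g) := hVle g (Submodule.starProjection_apply_mem (eu V) _)
      exact Submodule.sub_mem _ h1 h2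
    · exact Submodule.sub_starProjection_mem_orthogonal (K := eu V) (WithLp.toLp 2 (X g i))
  refine ⟨fun g => (J g, A g), ⟨?_, ?_, ?_, ?_, ?_⟩, ?_⟩
  · intro g; simp [hAdef]
  · intro g h; rw [hrowJ, hrowJ]
  · intro g; rw [hrowJ]; exact hVle g
  · intro g u hu v hv
    rw [dot_eq_inner]
    have hu' : u ∈ V := (hrowJ g) ▸ hu
    have hv' : WithLp.toLp 2 v ∈ (eu V)ᗮ := ((hrowA g) hv).2
    exact (Submodule.mem_orthogonal (eu V) _).mp hv' (WithLp.toLp 2 u) hu'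
  · rw [eq_bot_iff]
    intro x hx
    have hxV : x ∈ V := by
      rw [hVdef, Submodule.mem_iInf]
      intro g
      exact ((hrowA g) (Submodule.mem_iInf _ |>.mp hx g)).1
    have hxO : WithLp.toLp 2 x ∈ (eu V)ᗮ :=
      ((hrowA ⟨0, hG⟩) (Submodule.mem_iInf _ |>.mp hx ⟨0, hG⟩)).2
    have h0 := (Submodule.mem_orthogonal (eu V) _).mp hxO (WithLp.toLp 2 x) hxV
    rw [Submodule.mem_bot]
    exact congrArg WithLp.ofLp
      ((inner_self_eq_zero (𝕜 := ℝ) (E := EuclideanSpace ℝ (Fin p))).mp h0)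
  · -- uniqueness
    rintro Y ⟨hsum, hrow, hle, horth, hinf⟩
    set g₀ : Fin G := ⟨0, hG⟩
    set W : Submodule ℝ (Fin p → ℝ) := rowSpace (Y g₀).1 with hWdef
    have hWg : ∀ g, rowSpace (Y g).1 = W := fun g => hrow g g₀
    have hWV : W ≤ V := by
      refine le_iInf fun g => ?_
      rw [← hWg g]; exact hle g
    have hAW : ∀ g, rowSpace (Y g).2 ≤ pl (eu W)ᗮ := by
      intro g
      intro v hv
      refine (Submodule.mem_orthogonal (eu W) _).mpr fun u hu => ?_
      have := horth g u.ofLp ((hWg g) ▸ hu) v hv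
      rw [dot_eq_inner] at this
      exact this
    have hrowX : ∀ g, rowSpace (X g) ≤ W ⊔ rowSpace (Y g).2 := by
      intro g
      rw [rowSpace, Submodule.span_le]
      rintro _ ⟨i, rfl⟩
      have : X g i = (Y g).1 i + (Y g).2 i := congrFun (hsum g) i
      rw [this]
      exact Submodule.add_mem _
        (Submodule.mem_sup_left ((hWg g) ▸ row_mem_rowSpace (Y g).1 i))
        (Submodule.mem_sup_right (row_mem_rowSpace (Y g).2 i))
    have hVW : V ≤ W := by
      intro v hv
      have key : ∀ g, v - ((eu W).starProjection (WithLp.toLp 2 v)).ofLp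
          ∈ rowSpace (Y g).2 := by
        intro g
        have hvg : v ∈ W ⊔ rowSpace (Y g).2 := hrowX g (hVle g hv)
        obtain ⟨w, hw, a, ha, rfl⟩ := Submodule.mem_sup.mp hvg
        have : (eu W).starProjection (WithLp.toLp 2 (w + a)) = WithLp.toLp 2 w :=
          Submodule.eq_starProjection_of_mem_orthogonal' (hw : WithLp.toLp 2 w ∈ eu W)
            (hAW g ha : WithLp.toLp 2 a ∈ (eu W)ᗮ) rfl
        rw [this]
        simpa using ha
      have : v - ((eu W).starProjection (WithLp.toLp 2 v)).ofLp
          ∈ (⨅ g, rowSpace (Y g).2 : Submodule ℝ (Fin p → ℝ)) :=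
        Submodule.mem_iInf _ |>.mpr key
      rw [hinf, Submodule.mem_bot, sub_eq_zero] at this
      rw [this]
      exact Submodule.starProjection_apply_mem (eu W) _
    have hWV' : W = V := le_antisymm hWV hVW
    funext g
    have hJ1 : (Y g).1 = J g := by
      funext i
      have h1 : (Y g).1 i ∈ V := hWV' ▸ (hWg g) ▸ row_mem_rowSpace (Y g).1 i
      have h2 : WithLp.toLp 2 ((Y g).2 i) ∈ (eu V)ᗮ := by
        rw [← hWV']
        exact hAW g (row_mem_rowSpace (Y g).2 i)
      have : (eu V).starProjection (WithLp.toLp 2 (X g i)) = WithLp.toLp 2 ((Y g).1 i) :=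
        Submodule.eq_starProjection_of_mem_orthogonal' (h1 : WithLp.toLp 2 ((Y g).1 i) ∈ eu V)
          h2 (congrArg (WithLp.toLp 2) (congrFun (hsum g) i))
      exact (congrArg WithLp.ofLp this).symm
    have hJ2 : (Y g).2 = A g := by
      have := hsum g
      rw [hJ1] at this
      rw [hAdef]
      simp only
      rw [this]
      abel
    rw [Prod.ext_iff]
    exact ⟨hJ1, hJ2⟩
end

section
/- Let X be an n × p real matrix and W a p × K real matrix such that W'W is invertible and col(W) ⊆ row(X). Then the row space of the matrix J := X W (W'W)^{-1} W' equals col(W). In particular, if X_1,…,X_G are matrices with p columns and col(W) = ∩_{g=1}^G row(X_g), then the matrices J_g := X_g W (W'W)^{-1} W' all have the same row space, equal to ∩_{g=1}^G row(X_g). -/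
/-!
Write `P = W (W'W)⁻¹ W'`, so `J = X P`. Since `W' P = W'`, the matrix `P` acts as the identity on
row vectors in `col(W) = row(W')`. Every such vector is `d' X` for some `d` because
`col(W) ⊆ row(X)`, hence equals `d' X P = d' J`; conversely `J = (X W (W'W)⁻¹) W'` has its rows
in `row(W') = col(W)`. The second claim is the first one applied to each `X_g`.
-/

open Matrix

/-- The column space of a matrix: the span of its columns. -/
def colSpace {m k : ℕ} (M : Matrix (Fin m) (Fin k) ℝ) : Submodule ℝ (Fin m → ℝ) :=
  Submodule.span ℝ (Set.range Mᵀ)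

lemma rowSpace_eq_range {m k : ℕ} (M : Matrix (Fin m) (Fin k) ℝ) :
    rowSpace M = LinearMap.range M.vecMulLinear :=
  (range_vecMulLinear M).symm

lemma colSpace_eq_rowSpace_transpose {m k : ℕ} (M : Matrix (Fin m) (Fin k) ℝ) :
    colSpace M = rowSpace Mᵀ :=
  rfl

lemma rowSpace_mul_le {m q k : ℕ} (A : Matrix (Fin m) (Fin q) ℝ)
    (B : Matrix (Fin q) (Fin k) ℝ) : rowSpace (A * B) ≤ rowSpace B := by
  rw [rowSpace_eq_range, rowSpace_eq_range]
  rintro v ⟨c, rfl⟩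
  exact ⟨c ᵥ* A, by simp [vecMul_vecMul]⟩

lemma vecMul_eq_self_of_mem_rowSpace {m k : ℕ} {B : Matrix (Fin m) (Fin k) ℝ}
    {P : Matrix (Fin k) (Fin k) ℝ} (hBP : B * P = B) {v : Fin k → ℝ} (hv : v ∈ rowSpace B) :
    v ᵥ* P = v := by
  rw [rowSpace_eq_range] at hv
  obtain ⟨c, rfl⟩ := hv
  simp [vecMul_vecMul, hBP]

lemma rowSpace_le_rowSpace_mul_of_mul_eq {m n k : ℕ} {B : Matrix (Fin m) (Fin k) ℝ}
    {X : Matrix (Fin n) (Fin k) ℝ} {P : Matrix (Fin k) (Fin k) ℝ} (hBP : B * P = B)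
    (hBX : rowSpace B ≤ rowSpace X) : rowSpace B ≤ rowSpace (X * P) := by
  intro v hv
  obtain ⟨d, hd⟩ := (rowSpace_eq_range X).le (hBX hv)
  rw [rowSpace_eq_range]
  refine ⟨d, ?_⟩
  simp only [vecMulLinear_apply] at hd ⊢
  rw [← vecMul_vecMul, hd, vecMul_eq_self_of_mem_rowSpace hBP hv]

lemma transpose_mul_projection {p K : ℕ} {W : Matrix (Fin p) (Fin K) ℝ}
    (hW : IsUnit (Wᵀ * W)) : Wᵀ * (W * (Wᵀ * W)⁻¹ * Wᵀ) = Wᵀ := by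
  rw [← Matrix.mul_assoc, ← Matrix.mul_assoc, mul_nonsing_inv _ ((isUnit_iff_isUnit_det _).mp hW),
    Matrix.one_mul]

theorem rowSpace_mul_projection_eq_colSpace {n p K : ℕ} {X : Matrix (Fin n) (Fin p) ℝ}
    {W : Matrix (Fin p) (Fin K) ℝ} (hW : IsUnit (Wᵀ * W)) (hcol : colSpace W ≤ rowSpace X) :
    rowSpace (X * W * (Wᵀ * W)⁻¹ * Wᵀ) = colSpace W := by
  rw [colSpace_eq_rowSpace_transpose] at hcol ⊢
  refine le_antisymm (rowSpace_mul_le _ Wᵀ) ?_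
  have h := rowSpace_le_rowSpace_mul_of_mul_eq (transpose_mul_projection hW) hcol
  simpa only [Matrix.mul_assoc] using h

/-- If `W'W` is invertible and `col(W) ⊆ row(X)`, then the row space of
`J = X W (W'W)⁻¹ W'` equals `col(W)`.  In particular, if `col(W) = ⋂_g row(X_g)`,
then the matrices `J_g = X_g W (W'W)⁻¹ W'` all have the same row space, equal to
`⋂_g row(X_g)`. -/
theorem stmt5 (n p K : ℕ) (X : Matrix (Fin n) (Fin p) ℝ)
    (W : Matrix (Fin p) (Fin K) ℝ)
    (hW : IsUnit (Wᵀ * W))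
    (hcol : colSpace W ≤ rowSpace X) :
    rowSpace (X * W * (Wᵀ * W)⁻¹ * Wᵀ) = colSpace W ∧
    ∀ (G : ℕ) (m : Fin G → ℕ) (Xs : ∀ g : Fin G, Matrix (Fin (m g)) (Fin p) ℝ),
      colSpace W = (⨅ g, rowSpace (Xs g)) →
      ∀ g, rowSpace (Xs g * W * (Wᵀ * W)⁻¹ * Wᵀ) = ⨅ h, rowSpace (Xs h) := by
  refine ⟨rowSpace_mul_projection_eq_colSpace hW hcol, fun G m Xs hEq g => ?_⟩
  have hg : colSpace W ≤ rowSpace (Xs g) := hEq ▸ iInf_le _ g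
  rw [rowSpace_mul_projection_eq_colSpace hW hg, hEq]
end

section
/- Let X be an n × p real matrix, W a p × K real matrix and W_g a p × K_g real matrix such that W'W and W_g'W_g are invertible. Suppose W'W_g = 0 and W'X'X W_g = 0. Define J := X W (W'W)^{-1} W' and A := X W_g (W_g'W_g)^{-1} W_g'. Then J A' = 0 and A' J = 0; consequently row(J) is orthogonal to row(A) and col(J) is orthogonal to col(A). -/
open Matrix

section Projections

variable {R : Type*} [CommRing R] {n p k l : Type*} [Fintype p] [Fintype k] [Fintype l]
  (X : Matrix n p R) (W : Matrix p k R) (Wg : Matrix p l R) (S : Matrix k k R) (T : Matrix l l R)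

theorem mul_transpose_eq_zero_of_transpose_mul_eq_zero (h : Wᵀ * Wg = 0) :
    X * W * S * Wᵀ * (X * Wg * T * Wgᵀ)ᵀ = 0 := by
  have h' : ∀ M : Matrix l n R, Wᵀ * (Wg * M) = 0 := fun M => by
    rw [← Matrix.mul_assoc, h, Matrix.zero_mul]
  simp only [transpose_mul, transpose_transpose, Matrix.mul_assoc, h', Matrix.mul_zero]

theorem transpose_mul_eq_zero_of_transpose_mul_mul_eq_zero [Fintype n]
    (h : Wᵀ * Xᵀ * X * Wg = 0) : (X * Wg * T * Wgᵀ)ᵀ * (X * W * S * Wᵀ) = 0 := by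
  have hg : Wgᵀ * Xᵀ * X * W = 0 := by
    simpa only [transpose_mul, transpose_transpose, transpose_zero, Matrix.mul_assoc] using congrArg transpose h
  have h' : ∀ M : Matrix k p R, Wgᵀ * (Xᵀ * (X * (W * M))) = 0 := fun M => by
    simp only [← Matrix.mul_assoc, hg, Matrix.zero_mul]
  simp only [transpose_mul, Matrix.mul_assoc, h', Matrix.mul_zero]

end Projections

theorem mem_rowSpace_iff {m k : ℕ} {M : Matrix (Fin m) (Fin k) ℝ} {u : Fin k → ℝ} :
    u ∈ rowSpace M ↔ ∃ c, c ᵥ* M = u := by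
  simp only [vecMul_eq_sum]
  exact Submodule.mem_span_range_iff_exists_fun ℝ

theorem orthSub_rowSpace_of_mul_transpose_eq_zero {m l k : ℕ} {M : Matrix (Fin m) (Fin k) ℝ}
    {N : Matrix (Fin l) (Fin k) ℝ} (h : M * Nᵀ = 0) : OrthSub (rowSpace M) (rowSpace N) := by
  rintro u hu v hv
  obtain ⟨c, rfl⟩ := mem_rowSpace_iff.mp hu
  obtain ⟨d, rfl⟩ := mem_rowSpace_iff.mp hv
  rw [← dotProduct_mulVec, ← mulVec_transpose, mulVec_mulVec, h, zero_mulVec, dotProduct_zero]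

theorem orthSub_colSpace_of_transpose_mul_eq_zero {m l k : ℕ} {M : Matrix (Fin k) (Fin m) ℝ}
    {N : Matrix (Fin k) (Fin l) ℝ} (h : Mᵀ * N = 0) : OrthSub (colSpace M) (colSpace N) :=
  orthSub_rowSpace_of_mul_transpose_eq_zero (by rwa [transpose_transpose])

theorem stmt7_general (n p K Kg : ℕ) (X : Matrix (Fin n) (Fin p) ℝ)
    (W : Matrix (Fin p) (Fin K) ℝ) (Wg : Matrix (Fin p) (Fin Kg) ℝ)
    (h1 : Wᵀ * Wg = 0) (h2 : Wᵀ * Xᵀ * X * Wg = 0)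
    (J A : Matrix (Fin n) (Fin p) ℝ)
    (hJ : J = X * W * (Wᵀ * W)⁻¹ * Wᵀ)
    (hA : A = X * Wg * (Wgᵀ * Wg)⁻¹ * Wgᵀ) :
    J * Aᵀ = 0 ∧ Aᵀ * J = 0 ∧
    OrthSub (rowSpace J) (rowSpace A) ∧ OrthSub (colSpace J) (colSpace A) := by
  have hJA : J * Aᵀ = 0 := by
    rw [hJ, hA]
    exact mul_transpose_eq_zero_of_transpose_mul_eq_zero X W Wg _ _ h1
  have hAJ : Aᵀ * J = 0 := by
    rw [hJ, hA]
    exact transpose_mul_eq_zero_of_transpose_mul_mul_eq_zero X W Wg _ _ h2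
  have hJtA : Jᵀ * A = 0 := by
    rw [← transpose_transpose A, ← transpose_mul, hAJ, transpose_zero]
  exact ⟨hJA, hAJ, orthSub_rowSpace_of_mul_transpose_eq_zero hJA,
    orthSub_colSpace_of_transpose_mul_eq_zero hJtA⟩

/-- Corollary 1: if `W'W_g = 0` and `W'X'X W_g = 0`, then for
`J = X W (W'W)⁻¹ W'` and `A = X W_g (W_g'W_g)⁻¹ W_g'` one has `J A' = 0` and
`A' J = 0`; consequently `row(J) ⊥ row(A)` and `col(J) ⊥ col(A)`. -/
theorem stmt7 (n p K Kg : ℕ) (X : Matrix (Fin n) (Fin p) ℝ)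
    (W : Matrix (Fin p) (Fin K) ℝ) (Wg : Matrix (Fin p) (Fin Kg) ℝ)
    (hW : IsUnit (Wᵀ * W)) (hWg : IsUnit (Wgᵀ * Wg))
    (h1 : Wᵀ * Wg = 0) (h2 : Wᵀ * Xᵀ * X * Wg = 0)
    (J A : Matrix (Fin n) (Fin p) ℝ)
    (hJ : J = X * W * (Wᵀ * W)⁻¹ * Wᵀ)
    (hA : A = X * Wg * (Wgᵀ * Wg)⁻¹ * Wgᵀ) :
    J * Aᵀ = 0 ∧ Aᵀ * J = 0 ∧
    OrthSub (rowSpace J) (rowSpace A) ∧ OrthSub (colSpace J) (colSpace A) :=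
  stmt7_general n p K Kg X W Wg h1 h2 J A hJ hA
end
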